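/- arXiv:2004.08503 — 6 statements merged into one kernel-verified Lean document; each statement's English description precedes it below -/
import Mathlib

section
/- Let p ≥ 1 and N ≥ 1. Let D be a (p+1)×(p+1) real matrix (rows and columns indexed 0,…,p) whose column sums satisfy ∑_{i=0}^{p} D_{ij} = 1 if j = p, −1 if j = 0, and 0 otherwise. For each element index k ∈ ℤ/Nℤ, let F^k ∈ ℝ^{p+1} be given nodal flux values and let F̂^k ∈ ℝ be a given numerical flux value at the interface shared by elements k and k+1. Define the strong-form residual R^k ∈ ℝ^{p+1} by R^k_i = −(D F^k)_i − b^k_i, where b^k_p = F̂^k − F^k_p, b^k_0 = −(F̂^{k−1} − F^k_0), and b^k_i = 0 for 0 < i < p. Then the method is conservative: ∑_{k ∈ ℤ/Nℤ} ∑_{i=0}^{p} R^k_i = 0. -/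
/-!
The column-sum property makes `1ᵀ D` the discrete boundary operator `e_p - e_0`, so the volume
term of each element contributes `F_p - F_0`, which cancels the nodal fluxes in the penalty
term `b`. Each element residual therefore sums to the difference `F̂^{k-1} - F̂^k` of its two
interface fluxes, and these telescope around the periodic mesh.
-/

open Finset Matrix

theorem Fin.ite_last_ite_zero_eq_single {M : Type*} [AddZeroClass M] {p : ℕ} (hp : p ≠ 0)
    (x y : M) :
    (fun j : Fin (p + 1) => if j = Fin.last p then x else if j = 0 then y else 0) =
      Pi.single (Fin.last p) x + Pi.single 0 y := by
  have hne : (0 : Fin (p + 1)) ≠ Fin.last p := fun h => hp (by simpa [Fin.ext_iff] using h.symm)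
  funext j
  by_cases hj : j = Fin.last p
  · simp [hj, hne.symm]
  · simp [hj, Pi.single_apply]

theorem Fintype.sum_comp_sub_sub_eq_zero {G M : Type*} [AddGroup G] [Fintype G] [AddCommGroup M]
    (f : G → M) (a : G) : ∑ x, (f (x - a) - f x) = 0 := by
  rw [Finset.sum_sub_distrib]
  exact sub_eq_zero.2 ((Equiv.subRight a).sum_comp f)

theorem Matrix.sum_mulVec_eq_sub_of_colSum {p : ℕ} (hp : p ≠ 0)
    {D : Matrix (Fin (p + 1)) (Fin (p + 1)) ℝ}
    (hD : ∀ j, ∑ i, D i j = if j = Fin.last p then 1 else if j = 0 then -1 else 0)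
    (v : Fin (p + 1) → ℝ) : ∑ i, (D *ᵥ v) i = v (Fin.last p) - v 0 := by
  have hcol : 1 ᵥ* D = Pi.single (Fin.last p) 1 + Pi.single 0 (-1) := by
    rw [← Fin.ite_last_ite_zero_eq_single hp, ← funext hD]
    ext j
    simp [vecMul, dotProduct]
  rw [← one_dotProduct, dotProduct_mulVec, hcol, add_dotProduct, single_dotProduct,
    single_dotProduct]
  ring

theorem sum_strongForm_residual_eq_sub {p : ℕ} (hp : p ≠ 0)
    {D : Matrix (Fin (p + 1)) (Fin (p + 1)) ℝ}
    (hD : ∀ j, ∑ i, D i j = if j = Fin.last p then 1 else if j = 0 then -1 else 0)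
    (v : Fin (p + 1) → ℝ) (fL fR : ℝ) :
    ∑ i, (-(D *ᵥ v) i -
      if i = Fin.last p then fR - v (Fin.last p) else if i = 0 then -(fL - v 0) else 0) =
      fL - fR := by
  rw [sum_sub_distrib, sum_neg_distrib, sum_mulVec_eq_sub_of_colSum hp hD,
    Fin.ite_last_ite_zero_eq_single hp]
  simp only [neg_sub, Pi.add_apply, sum_add_distrib, sum_pi_single', mem_univ, ↓reduceIte]
  ring

/-- Conservation of the one-dimensional strong-form DG-SEM discretization on a
periodic mesh of `N` elements: if the differentiation matrix `D` satisfies the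
summation-by-parts column-sum property, then the total residual vanishes. -/
theorem strong_form_dg_conservation (p : ℕ) (hp : 1 ≤ p) (N : ℕ) [NeZero N]
    (D : Matrix (Fin (p + 1)) (Fin (p + 1)) ℝ)
    (hD : ∀ j : Fin (p + 1), ∑ i : Fin (p + 1), D i j =
      if j = Fin.last p then 1 else if j = 0 then -1 else 0)
    (F : ZMod N → Fin (p + 1) → ℝ) (Fhat : ZMod N → ℝ)
    (b : ZMod N → Fin (p + 1) → ℝ)
    (hb : ∀ k : ZMod N, ∀ i : Fin (p + 1), b k i =
      if i = Fin.last p then Fhat k - F k (Fin.last p)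
      else if i = 0 then -(Fhat (k - 1) - F k 0) else 0)
    (R : ZMod N → Fin (p + 1) → ℝ)
    (hR : ∀ k : ZMod N, ∀ i : Fin (p + 1), R k i = -(D.mulVec (F k)) i - b k i) :
    ∑ k : ZMod N, ∑ i : Fin (p + 1), R k i = 0 := by
  have helement (k : ZMod N) : ∑ i, R k i = Fhat (k - 1) - Fhat k := by
    simp only [hR, hb]
    exact sum_strongForm_residual_eq_sub (by omega) hD (F k) (Fhat (k - 1)) (Fhat k)
  rw [Fintype.sum_congr _ _ helement]
  exact Fintype.sum_comp_sub_sub_eq_zero Fhat 1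
end

section
/- Let E be a real vector space, A ⊆ E a convex set, and d ≥ 1 an integer; set γ = 2d. Let u ∈ A, let m > 0, Δt > 0, let α̃ ∈ [0,1], and for each k ∈ {1,…,d} let r_k^+, r_k^− ∈ E satisfy u + (Δt/m)·γ·α̃ • r_k^+ ∈ A and u − (Δt/m)·γ·α̃ • r_k^− ∈ A. Then for any coefficients α_k^+, α_k^− ∈ [0, α̃] (k = 1,…,d), the flux-corrected value u' = u + (Δt/m)·∑_{k=1}^{d} ( α_k^+ • r_k^+ − α_k^− • r_k^− ) belongs to A. -/
/-!
Each face contribution, scaled up by `γ = 2d`, is a point `u ± (Δt/m) γ α_k^± • r_k^±` on the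
segment from `u` to the provisional state `u ± (Δt/m) γ α̃ • r_k^±`, hence in `A`. The update `u'` is
the average of these `2d` points.
-/

open Finset

section

variable {E : Type*} [AddCommGroup E] [Module ℝ E] {A : Set E}

theorem Convex.add_smul_mem_of_mem_Icc (hA : Convex ℝ A) {u v : E} (hu : u ∈ A) {a b : ℝ}
    (hb : u + b • v ∈ A) (ha : a ∈ Set.Icc 0 b) : u + a • v ∈ A := by
  rcases ha.1.eq_or_lt with rfl | ha₀
  · simpa using hu
  have hb₀ : 0 < b := ha₀.trans_le ha.2
  have hab : a / b ∈ Set.Icc (0 : ℝ) 1 := ⟨by positivity, (div_le_one hb₀).2 ha.2⟩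
  simpa [smul_smul, div_mul_cancel₀ a hb₀.ne'] using hA.add_smul_mem hu hb hab

theorem Convex.add_sum_mem {ι : Type*} (hA : Convex ℝ A) {u : E} (hu : u ∈ A) {s : Finset ι}
    {v : ι → E} (hv : ∀ i ∈ s, u + (#s : ℝ) • v i ∈ A) : u + ∑ i ∈ s, v i ∈ A := by
  rcases s.eq_empty_or_nonempty with rfl | hs
  · simpa using hu
  have hn : (#s : ℝ) ≠ 0 := by positivity
  have hweights : ∑ _i ∈ s, (#s : ℝ)⁻¹ = 1 := by simp [hn]
  have hmean : ∑ i ∈ s, (#s : ℝ)⁻¹ • (u + (#s : ℝ) • v i) = u + ∑ i ∈ s, v i := by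
    simp only [smul_add, smul_smul, inv_mul_cancel₀ hn, one_smul, sum_add_distrib, sum_const,
      ← Nat.cast_smul_eq_nsmul ℝ, mul_inv_cancel₀ hn]
  rw [← hmean]
  exact hA.sum_mem (fun _ _ => by positivity) hweights hv

end

theorem subcell_convex_limiting_mem_general {E : Type*} [AddCommGroup E] [Module ℝ E]
    {A : Set E} (hA : Convex ℝ A) (d : ℕ)
    (u : E) (hu : u ∈ A) (m Δt : ℝ)
    (αt : ℝ)
    (rp rm : Fin d → E)
    (hrp : ∀ k : Fin d, u + ((Δt / m) * (2 * d) * αt) • rp k ∈ A)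
    (hrm : ∀ k : Fin d, u - ((Δt / m) * (2 * d) * αt) • rm k ∈ A)
    (αp αm : Fin d → ℝ)
    (hαp : ∀ k : Fin d, αp k ∈ Set.Icc 0 αt) (hαm : ∀ k : Fin d, αm k ∈ Set.Icc 0 αt) :
    u + (Δt / m) • (∑ k : Fin d, (αp k • rp k - αm k • rm k)) ∈ A := by
  have hface (r : E) (a : ℝ) (ha : a ∈ Set.Icc 0 αt)
      (hr : u + ((Δt / m) * (2 * d) * αt) • r ∈ A) : u + (2 * d : ℝ) • ((Δt / m * a) • r) ∈ A := by
    rw [mul_comm, ← smul_smul] at hr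
    convert hA.add_smul_mem_of_mem_Icc hu hr ha using 2
    simp only [smul_smul]
    ring_nf
  let v : Fin d ⊕ Fin d → E :=
    Sum.elim (fun k => (Δt / m * αp k) • rp k) (fun k => -((Δt / m * αm k) • rm k))
  have hcard : ((#(univ : Finset (Fin d ⊕ Fin d)) : ℕ) : ℝ) = 2 * d := by
    simp [two_mul]
  have hsum : ∑ i, v i = (Δt / m) • ∑ k : Fin d, (αp k • rp k - αm k • rm k) := by
    simp [v, Fintype.sum_sum_type, smul_sum, mul_smul, sub_eq_add_neg, sum_add_distrib]
  rw [← hsum]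
  refine hA.add_sum_mem hu fun i _ => ?_
  rw [hcard]
  rcases i with k | k
  · exact hface _ _ (hαp k) (hrp k)
  · simpa [v] using hface (-rm k) _ (hαm k) (by simpa [sub_eq_add_neg] using hrm k)

/-- Subcell convex limiting preserves convex invariant sets: if the provisional
states `u ± (Δt/m)·γ·α̃ • r_k^±` (with `γ = 2d`) all lie in the convex set `A`
containing `u`, then for any face limiting coefficients `α_k^± ∈ [0, α̃]` the
flux-corrected value lies in `A`. -/
theorem subcell_convex_limiting_mem {E : Type*} [AddCommGroup E] [Module ℝ E]
    {A : Set E} (hA : Convex ℝ A) (d : ℕ) (hd : 1 ≤ d)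
    (u : E) (hu : u ∈ A) (m Δt : ℝ) (hm : 0 < m) (hΔt : 0 < Δt)
    (αt : ℝ) (hαt : αt ∈ Set.Icc (0:ℝ) 1)
    (rp rm : Fin d → E)
    (hrp : ∀ k : Fin d, u + ((Δt / m) * (2 * d) * αt) • rp k ∈ A)
    (hrm : ∀ k : Fin d, u - ((Δt / m) * (2 * d) * αt) • rm k ∈ A)
    (αp αm : Fin d → ℝ)
    (hαp : ∀ k : Fin d, αp k ∈ Set.Icc 0 αt) (hαm : ∀ k : Fin d, αm k ∈ Set.Icc 0 αt) :
    u + (Δt / m) • (∑ k : Fin d, (αp k • rp k - αm k • rm k)) ∈ A :=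
  subcell_convex_limiting_mem_general hA d u hu m Δt αt rp rm hrp hrm αp αm hαp hαm
end

section
/- Let u, u_min, u_max ∈ ℝ with u_min ≤ u ≤ u_max, let m > 0 and Δt > 0, let J be a finite index set with fluxes f_j ∈ ℝ for j ∈ J, and let α̃ ∈ [0,1] satisfy u + (Δt/m)·α̃·∑_{j∈J} max(f_j, 0) ≤ u_max and u + (Δt/m)·α̃·∑_{j∈J} min(f_j, 0) ≥ u_min. Then for any coefficients α_j ∈ [0, α̃] (j ∈ J), the limited update u' = u + (Δt/m)·∑_{j∈J} α_j f_j satisfies u_min ≤ u' ≤ u_max. -/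
/-!
Split each flux into its positive and negative part. Since `0 ≤ α j ≤ α̃`, the limited flux
`α j * f j` lies between `α̃ * min (f j) 0` and `α̃ * max (f j) 0`; summing, the limited update
lies between the two fully limited one-sided updates, which respect the bounds by assumption.
-/

open Finset

section LimitedFlux

variable {R : Type*} [Ring R] [LinearOrder R] [IsStrictOrderedRing R]

theorem mul_le_mul_max_zero {c a : R} (hc : 0 ≤ c) (hca : c ≤ a) (x : R) :
    c * x ≤ a * max x 0 :=
  calc c * x ≤ c * max x 0 := mul_le_mul_of_nonneg_left (le_max_left x 0) hc
    _ ≤ a * max x 0 := mul_le_mul_of_nonneg_right hca (le_max_right x 0)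

theorem mul_min_zero_le_mul {c a : R} (hc : 0 ≤ c) (hca : c ≤ a) (x : R) :
    a * min x 0 ≤ c * x :=
  calc a * min x 0 ≤ c * min x 0 := mul_le_mul_of_nonpos_right hca (min_le_right x 0)
    _ ≤ c * x := mul_le_mul_of_nonneg_left (min_le_left x 0) hc

variable {ι : Type*} {J : Finset ι} {α f : ι → R} {a : R}

theorem sum_mul_le_mul_sum_max_zero (hα : ∀ j ∈ J, α j ∈ Set.Icc 0 a) :
    ∑ j ∈ J, α j * f j ≤ a * ∑ j ∈ J, max (f j) 0 := by
  rw [mul_sum]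
  exact sum_le_sum fun j hj => mul_le_mul_max_zero (hα j hj).1 (hα j hj).2 (f j)

theorem mul_sum_min_zero_le_sum_mul (hα : ∀ j ∈ J, α j ∈ Set.Icc 0 a) :
    a * ∑ j ∈ J, min (f j) 0 ≤ ∑ j ∈ J, α j * f j := by
  rw [mul_sum]
  exact sum_le_sum fun j hj => mul_min_zero_le_mul (hα j hj).1 (hα j hj).2 (f j)

end LimitedFlux

theorem zalesak_limiter_bounds_general {ι : Type*} (J : Finset ι)
    (u umin umax : ℝ)
    (m Δt : ℝ) (hm : 0 < m) (hΔt : 0 < Δt)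
    (f : ι → ℝ) (αt : ℝ)
    (hpos : u + (Δt / m) * αt * ∑ j ∈ J, max (f j) 0 ≤ umax)
    (hneg : umin ≤ u + (Δt / m) * αt * ∑ j ∈ J, min (f j) 0)
    (α : ι → ℝ) (hα : ∀ j ∈ J, α j ∈ Set.Icc 0 αt) :
    umin ≤ u + (Δt / m) * ∑ j ∈ J, α j * f j ∧
      u + (Δt / m) * ∑ j ∈ J, α j * f j ≤ umax := by
  have hc : 0 ≤ Δt / m := by positivity
  constructor
  · calc umin ≤ u + (Δt / m) * (αt * ∑ j ∈ J, min (f j) 0) := by rwa [← mul_assoc]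
      _ ≤ u + (Δt / m) * ∑ j ∈ J, α j * f j := by
        gcongr; exact mul_sum_min_zero_le_sum_mul hα
  · calc u + (Δt / m) * ∑ j ∈ J, α j * f j
        ≤ u + (Δt / m) * (αt * ∑ j ∈ J, max (f j) 0) := by
          gcongr; exact sum_mul_le_mul_sum_max_zero hα
      _ ≤ umax := by rwa [← mul_assoc]

/-- Correctness of the Zalesak-type flux limiter: if the provisional coefficient
`α̃` limits the sums of positive and negative parts of the antidiffusive fluxes
so that the bounds `u_min`, `u_max` are respected, then any per-flux
coefficients `α_j ≤ α̃` yield a bounds-preserving update. -/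
theorem zalesak_limiter_bounds {ι : Type*} (J : Finset ι)
    (u umin umax : ℝ) (hmin : umin ≤ u) (hmax : u ≤ umax)
    (m Δt : ℝ) (hm : 0 < m) (hΔt : 0 < Δt)
    (f : ι → ℝ) (αt : ℝ) (hαt : αt ∈ Set.Icc (0:ℝ) 1)
    (hpos : u + (Δt / m) * αt * ∑ j ∈ J, max (f j) 0 ≤ umax)
    (hneg : umin ≤ u + (Δt / m) * αt * ∑ j ∈ J, min (f j) 0)
    (α : ι → ℝ) (hα : ∀ j ∈ J, α j ∈ Set.Icc 0 αt) :
    umin ≤ u + (Δt / m) * ∑ j ∈ J, α j * f j ∧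
      u + (Δt / m) * ∑ j ∈ J, α j * f j ≤ umax :=
  zalesak_limiter_bounds_general J u umin umax m Δt hm hΔt f αt hpos hneg α hα
end

section
/- Fix a real number γ > 1, a real number r, and an integer n ≥ 1. For (ρ, m, ℰ) ∈ ℝ × ℝⁿ × ℝ with ρ > 0, define the specific internal energy e = ℰ/ρ − ‖m‖²/(2ρ²) and, when e > 0, the specific entropy s = (1/(γ−1))·log e − log ρ. Then the set A(r) = { (ρ, m, ℰ) ∈ ℝ × ℝⁿ × ℝ : ρ > 0, e > 0, s ≥ r } is a convex subset of ℝ × ℝⁿ × ℝ. -/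
/-! For `ρ > 0` and `c = exp ((γ - 1) r)`, the conditions `e > 0`, `s ≥ r` together say exactly
`c ρ^γ ≤ ρ e = ℰ - ‖m‖² / (2ρ)`. Hence `A(r)` is a sublevel set of
`c ρ^γ + ‖m‖² / (2ρ) - ℰ` on the half space `ρ > 0`, where this function is convex: `ρ ↦ ρ^γ`
is convex for `γ ≥ 1`, and `‖m‖² / ρ` is the perspective of `‖m‖²`, whose convexity reduces to
`(a t₁ + b t₂)² / (a ρ₁ + b ρ₂) ≤ a t₁² / ρ₁ + b t₂² / ρ₂`. -/

open Real Set

lemma sq_add_div_add_le_add_sq_div {a b ρ₁ ρ₂ : ℝ} (t₁ t₂ : ℝ) (ha : 0 ≤ a) (hb : 0 ≤ b)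
    (hρ₁ : 0 < ρ₁) (hρ₂ : 0 < ρ₂) :
    (a * t₁ + b * t₂) ^ 2 / (a * ρ₁ + b * ρ₂) ≤ a * (t₁ ^ 2 / ρ₁) + b * (t₂ ^ 2 / ρ₂) := by
  rcases (by positivity : 0 ≤ a * ρ₁ + b * ρ₂).eq_or_lt with hd | hd
  · rw [← hd, div_zero]
    positivity
  rw [div_le_iff₀ hd]
  have hgap : 0 ≤ a * b * (t₁ * ρ₂ - t₂ * ρ₁) ^ 2 / (ρ₁ * ρ₂) := by positivity
  calc (a * t₁ + b * t₂) ^ 2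
      = (a * (t₁ ^ 2 / ρ₁) + b * (t₂ ^ 2 / ρ₂)) * (a * ρ₁ + b * ρ₂)
          - a * b * (t₁ * ρ₂ - t₂ * ρ₁) ^ 2 / (ρ₁ * ρ₂) := by
        field_simp
        ring
    _ ≤ _ := by linarith

lemma convexOn_norm_sq_div {E : Type*} [SeminormedAddCommGroup E] [NormedSpace ℝ E] :
    ConvexOn ℝ {x : ℝ × E | 0 < x.1} fun x => ‖x.2‖ ^ 2 / x.1 := by
  refine ⟨convex_halfSpace_gt (LinearMap.fst ℝ ℝ E).isLinear 0, ?_⟩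
  rintro ⟨ρ₁, m₁⟩ (hρ₁ : 0 < ρ₁) ⟨ρ₂, m₂⟩ (hρ₂ : 0 < ρ₂) a b ha hb hab
  have hnorm : ‖a • m₁ + b • m₂‖ ≤ a * ‖m₁‖ + b * ‖m₂‖ :=
    convexOn_univ_norm.2 trivial trivial ha hb hab
  calc ‖a • m₁ + b • m₂‖ ^ 2 / (a * ρ₁ + b * ρ₂)
      ≤ (a * ‖m₁‖ + b * ‖m₂‖) ^ 2 / (a * ρ₁ + b * ρ₂) := by gcongr
    _ ≤ a * (‖m₁‖ ^ 2 / ρ₁) + b * (‖m₂‖ ^ 2 / ρ₂) :=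
      sq_add_div_add_le_add_sq_div _ _ ha hb hρ₁ hρ₂

lemma pos_and_le_entropy_iff {γ r ρ e : ℝ} (hγ : 1 < γ) (hρ : 0 < ρ) :
    (0 < e ∧ r ≤ 1 / (γ - 1) * log e - log ρ) ↔ exp ((γ - 1) * r) * ρ ^ γ ≤ ρ * e := by
  have hK : exp ((γ - 1) * r) * ρ ^ γ = ρ * exp ((γ - 1) * (r + log ρ)) := by
    conv_rhs => rw [← exp_log hρ, log_exp]
    rw [rpow_def_of_pos hρ, ← exp_add, ← exp_add]
    ring_nf
  have hs : r ≤ 1 / (γ - 1) * log e - log ρ ↔ (γ - 1) * (r + log ρ) ≤ log e := by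
    rw [one_div_mul_eq_div, le_sub_iff_add_le, le_div_iff₀ (sub_pos.2 hγ), mul_comm]
  rw [hK, mul_le_mul_iff_right₀ hρ]
  constructor
  · rintro ⟨he, hr⟩
    exact (le_log_iff_exp_le he).1 (hs.1 hr)
  · intro h
    have he : 0 < e := (exp_pos _).trans_le h
    exact ⟨he, hs.2 ((le_log_iff_exp_le he).2 h)⟩

lemma convexOn_rpow_add_norm_sq_div_sub {E : Type*} [SeminormedAddCommGroup E] [NormedSpace ℝ E]
    {γ c : ℝ} (hγ : 1 ≤ γ) (hc : 0 ≤ c) :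
    ConvexOn ℝ {x : ℝ × E × ℝ | 0 < x.1} fun x => c * x.1 ^ γ + ‖x.2.1‖ ^ 2 / (2 * x.1) - x.2.2 := by
  have hpressure : ConvexOn ℝ {x : ℝ × E × ℝ | 0 < x.1} fun x => c * x.1 ^ γ :=
    (((convexOn_rpow hγ).subset Ioi_subset_Ici_self (convex_Ioi 0)).smul hc).comp_linearMap
      (LinearMap.fst ℝ ℝ (E × ℝ))
  have hkinetic : ConvexOn ℝ {x : ℝ × E × ℝ | 0 < x.1} fun x => ‖x.2.1‖ ^ 2 / (2 * x.1) := by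
    refine ((convexOn_norm_sq_div.smul (by norm_num : (0 : ℝ) ≤ 1 / 2)).comp_linearMap
      ((LinearMap.fst ℝ ℝ (E × ℝ)).prod (LinearMap.fst ℝ E ℝ ∘ₗ LinearMap.snd ℝ ℝ (E × ℝ)))).congr
      fun x _ => ?_
    change 1 / 2 * (‖x.2.1‖ ^ 2 / x.1) = _
    ring
  exact (hpressure.add hkinetic).sub
    ((LinearMap.snd ℝ E ℝ ∘ₗ LinearMap.snd ℝ ℝ (E × ℝ)).concaveOn hpressure.1)

theorem euler_invariant_set_convex_general (γ : ℝ) (hγ : 1 < γ) (r : ℝ) (n : ℕ) :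
    Convex ℝ {x : ℝ × EuclideanSpace ℝ (Fin n) × ℝ |
      0 < x.1 ∧
      0 < x.2.2 / x.1 - ‖x.2.1‖ ^ 2 / (2 * x.1 ^ 2) ∧
      r ≤ (1 / (γ - 1)) * Real.log (x.2.2 / x.1 - ‖x.2.1‖ ^ 2 / (2 * x.1 ^ 2))
            - Real.log x.1} := by
  convert (convexOn_rpow_add_norm_sq_div_sub (E := EuclideanSpace ℝ (Fin n)) hγ.le
    (exp_pos ((γ - 1) * r)).le).convex_le 0 using 1
  ext ⟨ρ, m, ℰ⟩
  refine and_congr_right fun hρ => ?_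
  have hρe : ρ * (ℰ / ρ - ‖m‖ ^ 2 / (2 * ρ ^ 2)) = ℰ - ‖m‖ ^ 2 / (2 * ρ) := by
    field_simp
  rw [pos_and_le_entropy_iff hγ hρ, hρe, le_sub_iff_add_le, ← sub_nonpos]

/-- Convexity of the invariant set `A(r)` of the compressible Euler equations in
conserved variables `(ρ, m, ℰ)`: positive density, positive specific internal
energy `e = ℰ/ρ - ‖m‖²/(2ρ²)`, and specific entropy
`s = (1/(γ-1))·log e - log ρ` at least `r`. -/
theorem euler_invariant_set_convex (γ : ℝ) (hγ : 1 < γ) (r : ℝ) (n : ℕ) (hn : 1 ≤ n) :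
    Convex ℝ {x : ℝ × EuclideanSpace ℝ (Fin n) × ℝ |
      0 < x.1 ∧
      0 < x.2.2 / x.1 - ‖x.2.1‖ ^ 2 / (2 * x.1 ^ 2) ∧
      r ≤ (1 / (γ - 1)) * Real.log (x.2.2 / x.1 - ‖x.2.1‖ ^ 2 / (2 * x.1 ^ 2))
            - Real.log x.1} :=
  euler_invariant_set_convex_general γ hγ r n
end

section
/- For an integer p ≥ 1, let D̂ denote the (p+1)×(p+1) real matrix with rows and columns indexed by 0,…,p defined by D̂_{0,0} = −1/2, D̂_{p,p} = 1/2, D̂_{i,i+1} = 1/2 for 0 ≤ i ≤ p−1, D̂_{i,i−1} = −1/2 for 1 ≤ i ≤ p, and all other entries zero. Then the kernel of D̂ consists exactly of the constant vectors: D̂ v = 0 if and only if v_0 = v_1 = ⋯ = v_p. -/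
/-!
Extend `v` to a sequence on `ℕ` by clamping the index into `{0, …, p}`. Row `n` of `D̂ v = 0`
then says `v (n + 1) = v (n - 1)`, with the boundary rows giving `v 1 = v 0` and
`v p = v (p - 1)`, and for `n > p` this holds trivially. By induction consecutive values
agree, so `v` is constant; conversely every row of `D̂` sums to zero.
-/

/-- The sparse low-order differentiation matrix `D̂`: `-1/2` at the `(0,0)` entry,
`1/2` at the `(p,p)` entry, `1/2` on the superdiagonal, `-1/2` on the
subdiagonal, and `0` elsewhere. -/
noncomputable def sparseDiff (p : ℕ) : Matrix (Fin (p + 1)) (Fin (p + 1)) ℝ := fun i j =>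
  if (j : ℕ) = (i : ℕ) + 1 then 1 / 2
  else if (i : ℕ) = (j : ℕ) + 1 then -(1 / 2)
  else if i = j ∧ (i : ℕ) = 0 then -(1 / 2)
  else if i = j ∧ (i : ℕ) = p then 1 / 2
  else 0

/-- At `n = 0` the truncated subtraction makes the hypothesis read `f 1 = f 0`. -/
theorem apply_eq_apply_zero_of_apply_succ_eq_apply_pred {α : Type*} {f : ℕ → α}
    (h : ∀ n, f (n + 1) = f (n - 1)) (n : ℕ) : f n = f 0 := by
  have step : ∀ n, f (n + 1) = f n := by
    intro n
    induction n with
    | zero => exact h 0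
    | succ n ih => exact (h (n + 1)).trans ih.symm
  induction n with
  | zero => rfl
  | succ n ih => exact (step n).trans ih

/-- Clamping the neighbours `i ± 1` into `{0, …, p}` folds the boundary rows into the
central-difference pattern. -/
theorem sparseDiff_row {p : ℕ} (hp : 1 ≤ p) (i : Fin (p + 1)) :
    sparseDiff p i =
      Pi.single (Fin.clamp (i + 1) p) (1 / 2) - Pi.single (Fin.clamp (i - 1) p) (1 / 2) := by
  funext j
  have hi := i.isLt
  have hj := j.isLt
  simp only [sparseDiff, Pi.sub_apply, Pi.single_apply, Fin.ext_iff, Fin.coe_clamp]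
  split_ifs <;> first | omega | norm_num

theorem sparseDiff_mulVec_apply {p : ℕ} (hp : 1 ≤ p) (v : Fin (p + 1) → ℝ) (i : Fin (p + 1)) :
    (sparseDiff p).mulVec v i = (v (Fin.clamp (i + 1) p) - v (Fin.clamp (i - 1) p)) / 2 := by
  change sparseDiff p i ⬝ᵥ v = _
  rw [sparseDiff_row hp, sub_dotProduct, single_dotProduct, single_dotProduct]
  ring

/-- The kernel of the sparse low-order differentiation matrix `D̂` consists
exactly of the constant vectors. -/
theorem sparseDiff_kernel_eq_constants (p : ℕ) (hp : 1 ≤ p) (v : Fin (p + 1) → ℝ) :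
    (sparseDiff p).mulVec v = 0 ↔ ∀ i j : Fin (p + 1), v i = v j := by
  constructor
  · intro h
    have hrec : ∀ n, v (Fin.clamp (n + 1) p) = v (Fin.clamp (n - 1) p) := by
      intro n
      rcases le_or_gt n p with hn | hn
      · have hrow := sparseDiff_mulVec_apply hp v (Fin.clamp n p)
        rw [h, Pi.zero_apply] at hrow
        simp only [Fin.coe_clamp, min_eq_left hn] at hrow
        linarith
      · congr 1
        ext
        simp only [Fin.coe_clamp]
        omega
    have hconst :=
      apply_eq_apply_zero_of_apply_succ_eq_apply_pred (f := fun n ↦ v (Fin.clamp n p)) hrec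
    intro i j
    simpa [Fin.clamp, Nat.lt_succ_iff.mp i.isLt, Nat.lt_succ_iff.mp j.isLt] using
      (hconst i).trans (hconst j).symm
  · intro h
    funext i
    rw [sparseDiff_mulVec_apply hp, h _ (Fin.clamp (i - 1) p), sub_self, zero_div,
      Pi.zero_apply]
end

section
/- Let p ≥ 1 and let D̂ denote the (p+1)×(p+1) real matrix with rows and columns indexed by 0,…,p defined by D̂_{0,0} = −1/2, D̂_{p,p} = 1/2, D̂_{i,i+1} = 1/2 for 0 ≤ i ≤ p−1, D̂_{i,i−1} = −1/2 for 1 ≤ i ≤ p, and all other entries zero. Let M be a (p+1)×(p+1) diagonal matrix with strictly positive diagonal entries, and set N = (p+1)². Then for every b ∈ ℝ^N whose entries sum to zero, there exist x, y ∈ ℝ^N such that (M ⊗ D̂)ᵀ x + (D̂ ⊗ M)ᵀ y = b, where ⊗ denotes the Kronecker product of matrices. -/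
/-! The range of `[Aᵀ Bᵀ]` is the orthogonal complement of `ker A ∩ ker B`. For
`A = M ⊗ D̂` and `B = D̂ ⊗ M` with `M` invertible, a vector in both kernels has every row and
every column in `ker D̂`, which consists of the constants because the rows `0, …, p - 1` of
`D̂ z = 0` give `z₁ = z₀` and `z_{i+1} = z_{i-1}`. So only the globally constant vectors are
annihilated, and the right-hand side, having zero sum, is orthogonal to them. -/

open Kronecker

open Matrix

theorem Matrix.exists_transpose_mulVec_eq_of_forall_mulVec_eq_zero {m n : Type*} [Fintype m]
    [Fintype n] (C : Matrix m n ℝ) (b : n → ℝ)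
    (hb : ∀ z, C *ᵥ z = 0 → b ⬝ᵥ z = 0) : ∃ x, Cᵀ *ᵥ x = b := by
  classical
  have hmem : WithLp.toLp 2 b ∈ (toEuclideanLin C).kerᗮ := by
    refine (Submodule.mem_orthogonal' _ _).2 fun z hz => ?_
    have hCz : C *ᵥ z.ofLp = 0 := by simpa [toLpLin_apply] using hz
    simpa [EuclideanSpace.inner_eq_star_dotProduct, dotProduct_comm] using hb _ hCz
  rw [LinearMap.orthogonal_ker, ← toEuclideanLin_conjTranspose_eq_adjoint,
    conjTranspose_eq_transpose_of_trivial] at hmem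
  obtain ⟨x, hx⟩ := hmem
  exact ⟨x.ofLp, by simpa [toLpLin_apply] using congrArg WithLp.ofLp hx⟩

theorem Matrix.exists_transpose_mulVec_add_transpose_mulVec_eq {m₁ m₂ n : Type*} [Fintype m₁]
    [Fintype m₂] [Fintype n] (A : Matrix m₁ n ℝ) (B : Matrix m₂ n ℝ) (b : n → ℝ)
    (hb : ∀ z, A *ᵥ z = 0 → B *ᵥ z = 0 → b ⬝ᵥ z = 0) :
    ∃ x y, Aᵀ *ᵥ x + Bᵀ *ᵥ y = b := by
  obtain ⟨v, hv⟩ := (fromRows A B).exists_transpose_mulVec_eq_of_forall_mulVec_eq_zero b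
    fun z hz => hb z (by simpa using congrArg (· ∘ Sum.inl) hz)
      (by simpa using congrArg (· ∘ Sum.inr) hz)
  exact ⟨v ∘ Sum.inl, v ∘ Sum.inr, by simpa [transpose_fromRows] using hv⟩

theorem Matrix.diagonal_kronecker_mulVec_apply {m n R : Type*} [Fintype m] [Fintype n]
    [DecidableEq m] [CommSemiring R] (w : m → R) (D : Matrix n n R) (z : m × n → R)
    (i : m) (j : n) :
    ((diagonal w ⊗ₖ D) *ᵥ z) (i, j) = w i * (D *ᵥ fun l => z (i, l)) j := by
  simp [mulVec, dotProduct, Fintype.sum_prod_type, diagonal_apply, ite_mul, Finset.mul_sum,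
    mul_assoc]

theorem Matrix.kronecker_diagonal_mulVec_apply {m n R : Type*} [Fintype m] [Fintype n]
    [DecidableEq n] [CommSemiring R] (w : n → R) (D : Matrix m m R) (z : m × n → R)
    (i : m) (j : n) :
    ((D ⊗ₖ diagonal w) *ᵥ z) (i, j) = w j * (D *ᵥ fun k => z (k, j)) i := by
  simp [mulVec, dotProduct, Fintype.sum_prod_type, diagonal_apply, mul_ite, Finset.mul_sum,
    mul_left_comm, mul_comm]

/-- For `i = 0` the truncated `i - 1 = 0` gives `k = i`, which matches the corner entry
`D̂₀₀ = -1/2`. -/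
theorem sparseDiff_mulVec_apply_s14 {p : ℕ} (z : Fin (p + 1) → ℝ) (i j k : Fin (p + 1))
    (hj : (j : ℕ) = i + 1) (hk : (k : ℕ) = i - 1) :
    (sparseDiff p *ᵥ z) i = (z j - z k) / 2 := by
  rw [mulVec, dotProduct, Fintype.sum_eq_add j k (by omega)]
  · simp only [sparseDiff, Fin.ext_iff]
    split_ifs <;> first | omega | ring
  · intro l ⟨hlj, hlk⟩
    rw [Ne, Fin.ext_iff] at hlj hlk
    simp only [sparseDiff, Fin.ext_iff]
    split_ifs <;> first | omega | ring

theorem eq_of_sparseDiff_mulVec_eq_zero {p : ℕ} {z : Fin (p + 1) → ℝ}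
    (hz : sparseDiff p *ᵥ z = 0) (i j : Fin (p + 1)) : z i = z j := by
  suffices h : ∀ i : Fin (p + 1), z i = z 0 by rw [h i, h j]
  intro ⟨n, hn⟩
  induction n using Nat.strong_induction_on with
  | _ n ih =>
    rcases n with _ | n
    · rfl
    · have hrow :=
        sparseDiff_mulVec_apply_s14 z ⟨n, by omega⟩ ⟨n + 1, hn⟩ ⟨n - 1, by omega⟩ rfl rfl
      rw [hz, Pi.zero_apply] at hrow
      rw [← ih (n - 1) (by omega) (by omega)]
      linarith

theorem eq_of_kronecker_sparseDiff_mulVec_eq_zero {p : ℕ} {w : Fin (p + 1) → ℝ}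
    (hw : ∀ i, w i ≠ 0) {z : Fin (p + 1) × Fin (p + 1) → ℝ}
    (hx : (diagonal w ⊗ₖ sparseDiff p) *ᵥ z = 0)
    (hy : (sparseDiff p ⊗ₖ diagonal w) *ᵥ z = 0)
    (a c : Fin (p + 1) × Fin (p + 1)) : z a = z c := by
  have hrow (i : Fin (p + 1)) : sparseDiff p *ᵥ (fun l => z (i, l)) = 0 := funext fun j => by
    simpa [diagonal_kronecker_mulVec_apply, hw i] using congrFun hx (i, j)
  have hcol (j : Fin (p + 1)) : sparseDiff p *ᵥ (fun k => z (k, j)) = 0 := funext fun i => by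
    simpa [kronecker_diagonal_mulVec_apply, hw j] using congrFun hy (i, j)
  have h (i j : Fin (p + 1)) : z (i, j) = z (0, 0) :=
    (eq_of_sparseDiff_mulVec_eq_zero (hrow i) j 0).trans
      (eq_of_sparseDiff_mulVec_eq_zero (hcol 0) i 0)
  rw [h a.1 a.2, h c.1 c.2]

theorem metric_correction_solvable_general (p : ℕ)
    (w : Fin (p + 1) → ℝ) (hw : ∀ i, 0 < w i)
    (b : Fin (p + 1) × Fin (p + 1) → ℝ)
    (hb : ∑ ij : Fin (p + 1) × Fin (p + 1), b ij = 0) :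
    ∃ x y : Fin (p + 1) × Fin (p + 1) → ℝ,
      ((Matrix.diagonal w) ⊗ₖ (sparseDiff p)).transpose.mulVec x
        + ((sparseDiff p) ⊗ₖ (Matrix.diagonal w)).transpose.mulVec y = b := by
  refine exists_transpose_mulVec_add_transpose_mulVec_eq _ _ b fun z hx hy => ?_
  have hz : z = fun _ => z (0, 0) :=
    funext fun ij =>
      eq_of_kronecker_sparseDiff_mulVec_eq_zero (fun i => (hw i).ne') hx hy ij (0, 0)
  rw [hz, dotProduct, ← Finset.sum_mul, hb, zero_mul]

/-- Solvability of the two-dimensional conservative metric-term correction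
system: for any diagonal matrix `M` with positive diagonal and any right-hand
side `b` whose entries sum to zero, the underdetermined system
`(M ⊗ D̂)ᵀ x + (D̂ ⊗ M)ᵀ y = b` has a solution. -/
theorem metric_correction_solvable (p : ℕ) (hp : 1 ≤ p)
    (w : Fin (p + 1) → ℝ) (hw : ∀ i, 0 < w i)
    (b : Fin (p + 1) × Fin (p + 1) → ℝ)
    (hb : ∑ ij : Fin (p + 1) × Fin (p + 1), b ij = 0) :
    ∃ x y : Fin (p + 1) × Fin (p + 1) → ℝ,
      ((Matrix.diagonal w) ⊗ₖ (sparseDiff p)).transpose.mulVec x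
        + ((sparseDiff p) ⊗ₖ (Matrix.diagonal w)).transpose.mulVec y = b :=
  metric_correction_solvable_general p w hw b hb
end
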